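/- Let 0 < m < M, let α ∈ [0,1], and let A_j, B_j (1 ≤ j ≤ n) be positive invertible bounded operators on a complex Hilbert space with m A_j ≤ B_j ≤ M A_j for all j. Then ((√M + √m)/(2 (Mm)^{1/4})) · [(Σ_{j=1}^n A_j ♯_α B_j) ♯ (Σ_{j=1}^n A_j ♯_{1−α} B_j)] ≥ (Σ_{j=1}^n A_j) ♯ (Σ_{j=1}^n B_j). -/

import Mathlib

variable {H : Type*} [NormedAddCommGroup H] [InnerProductSpace ℂ H] [CompleteSpace H]

/-- Real power `A^r` of a bounded operator, via the continuous functional calculus. -/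
noncomputable def opRpow (A : H →L[ℂ] H) (r : ℝ) : H →L[ℂ] H :=
  cfc (fun x : ℝ => x ^ r) A

/-- The weighted operator geometric mean
`A ♯_μ B = A^{1/2} (A^{-1/2} B A^{-1/2})^μ A^{1/2}`. -/
noncomputable def wgm (μ : ℝ) (A B : H →L[ℂ] H) : H →L[ℂ] H :=
  opRpow A (1/2) * opRpow (opRpow A (-(1/2)) * B * opRpow A (-(1/2))) μ * opRpow A (1/2)

/-- The operator geometric mean `A ♯ B`. -/
noncomputable def geomMean (A B : H →L[ℂ] H) : H →L[ℂ] H := wgm (1/2) A B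

/-- The operator arithmetic mean `A ∇ B = (A + B)/2`. -/
noncomputable def arithMean (A B : H →L[ℂ] H) : H →L[ℂ] H := ((1 : ℝ)/2) • (A + B)

/-- The operator harmonic mean `A ! B = ((A⁻¹ + B⁻¹)/2)⁻¹`. -/
noncomputable def harmMean (A B : H →L[ℂ] H) : H →L[ℂ] H :=
  Ring.inverse (((1 : ℝ)/2) • (Ring.inverse A + Ring.inverse B))

/-!
Put `A = Σ A_j`, `B = Σ B_j` and `C = A^{-1/2} B A^{-1/2}`, whose spectrum lies in `[m, M]`.
On `[m, M]` the concave `t ↦ t^β` dominates its chord `f_β(t) = p_β + q_β t`; transporting this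
through `A_j^{1/2} (·) A_j^{1/2}` and summing gives
`Σ A_j ♯_β B_j ≥ p_β A + q_β B = A^{1/2} f_β(C) A^{1/2}`.
The geometric mean is congruence invariant and, on commuting operators, is the square root of the
product, so `(p_α A + q_α B) ♯ (p_{1-α} A + q_{1-α} B) = A^{1/2} √(f_α(C) f_{1-α}(C)) A^{1/2}`.
The scalar bound `√t ≤ κ √(f_α(t) f_{1-α}(t))` on `[m, M]`, with `κ` the constant of the statement
(Cauchy–Schwarz against the chord of `√`, then AM–GM), compares this with
`A ♯ B = A^{1/2} C^{1/2} A^{1/2}`, and monotonicity of `♯` finishes the proof.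
-/

open Set

section Chord

variable {m M α x : ℝ}

noncomputable def rpowChordIntercept (m M α : ℝ) : ℝ := (M * m ^ α - m * M ^ α) / (M - m)

noncomputable def rpowChordSlope (m M α : ℝ) : ℝ := (M ^ α - m ^ α) / (M - m)

lemma rpowChord_eq_convex_combination (hmM : m < M) (α x : ℝ) :
    rpowChordIntercept m M α + rpowChordSlope m M α * x
      = (M - x) / (M - m) * m ^ α + (x - m) / (M - m) * M ^ α := by
  have : M - m ≠ 0 := sub_ne_zero.mpr hmM.ne'
  unfold rpowChordIntercept rpowChordSlope
  field_simp
  ring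

lemma rpowChord_le_rpow (hm : 0 ≤ m) (hmM : m < M) (hα : α ∈ Icc 0 1) (hx : x ∈ Icc m M) :
    rpowChordIntercept m M α + rpowChordSlope m M α * x ≤ x ^ α := by
  have hMm : 0 < M - m := sub_pos.mpr hmM
  have hx_eq : (M - x) / (M - m) * m + (x - m) / (M - m) * M = x := by
    field_simp
    ring
  have h := (Real.concaveOn_rpow hα.1 hα.2).2 (mem_Ici.mpr hm) (mem_Ici.mpr (hm.trans hmM.le))
    (div_nonneg (sub_nonneg.mpr hx.2) hMm.le) (div_nonneg (sub_nonneg.mpr hx.1) hMm.le)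
    (by field_simp; ring)
  simp only [smul_eq_mul, hx_eq] at h
  rwa [rpowChord_eq_convex_combination hmM]

lemma rpowChord_pos (hm : 0 < m) (hmM : m < M) (hx : x ∈ Icc m M) :
    0 < rpowChordIntercept m M α + rpowChordSlope m M α * x := by
  have hMm : 0 < M - m := sub_pos.mpr hmM
  have hmα : 0 < m ^ α := Real.rpow_pos_of_pos hm α
  have hMα : 0 < M ^ α := Real.rpow_pos_of_pos (hm.trans hmM) α
  have hc : 0 < min (m ^ α) (M ^ α) := lt_min hmα hMα
  have hl : 0 ≤ (M - x) / (M - m) := div_nonneg (sub_nonneg.mpr hx.2) hMm.le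
  have hl' : 0 ≤ (x - m) / (M - m) := div_nonneg (sub_nonneg.mpr hx.1) hMm.le
  have hsum : (M - x) / (M - m) + (x - m) / (M - m) = 1 := by field_simp; ring
  rw [rpowChord_eq_convex_combination hmM]
  calc 0 < min (m ^ α) (M ^ α) := hc
    _ = (M - x) / (M - m) * min (m ^ α) (M ^ α) + (x - m) / (M - m) * min (m ^ α) (M ^ α) := by
      rw [← add_mul, hsum, one_mul]
    _ ≤ _ := by gcongr; exacts [min_le_left _ _, min_le_right _ _]

lemma sq_mul_sqrt_add_mul_sqrt_le {l l' u U v V : ℝ} (hl : 0 ≤ l) (hl' : 0 ≤ l') (hu : 0 ≤ u)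
    (hU : 0 ≤ U) (hv : 0 ≤ v) (hV : 0 ≤ V) :
    (l * √(u * v) + l' * √(U * V)) ^ 2 ≤ (l * u + l' * U) * (l * v + l' * V) := by
  have key : ∀ a b A B : ℝ, (l * (a * b) + l' * (A * B)) ^ 2
      ≤ (l * a ^ 2 + l' * A ^ 2) * (l * b ^ 2 + l' * B ^ 2) := fun a b A B => by
    nlinarith [mul_nonneg (mul_nonneg hl hl') (sq_nonneg (a * B - A * b))]
  simpa only [Real.sqrt_mul hu, Real.sqrt_mul hU, Real.sq_sqrt hu, Real.sq_sqrt hU,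
    Real.sq_sqrt hv, Real.sq_sqrt hV] using key √u √v √U √V

lemma sq_rpowChord_half_le_mul (hm : 0 < m) (hmM : m < M) (hx : x ∈ Icc m M) (α : ℝ) :
    (rpowChordIntercept m M (1 / 2) + rpowChordSlope m M (1 / 2) * x) ^ 2
      ≤ (rpowChordIntercept m M α + rpowChordSlope m M α * x)
        * (rpowChordIntercept m M (1 - α) + rpowChordSlope m M (1 - α) * x) := by
  have hM : 0 < M := hm.trans hmM
  have hMm : 0 < M - m := sub_pos.mpr hmM
  have hsplit : ∀ {y : ℝ}, 0 < y → y ^ (1 / 2 : ℝ) = √(y ^ α * y ^ (1 - α)) := fun hy => by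
    rw [← Real.rpow_add hy, add_sub_cancel, Real.rpow_one, Real.sqrt_eq_rpow]
  simp only [rpowChord_eq_convex_combination hmM, hsplit hm, hsplit hM]
  exact sq_mul_sqrt_add_mul_sqrt_le (div_nonneg (sub_nonneg.mpr hx.2) hMm.le)
    (div_nonneg (sub_nonneg.mpr hx.1) hMm.le) (by positivity) (by positivity) (by positivity)
    (by positivity)

lemma sqrt_le_mul_rpowChord_half (hm : 0 < m) (hmM : m < M) (hx : x ∈ Icc m M) :
    √x ≤ (√M + √m) / (2 * (M * m) ^ (1 / 4 : ℝ))
      * (rpowChordIntercept m M (1 / 2) + rpowChordSlope m M (1 / 2) * x) := by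
  have hM : 0 < M := hm.trans hmM
  have hMm : M - m ≠ 0 := (sub_pos.mpr hmM).ne'
  have hx0 : 0 ≤ x := hm.le.trans hx.1
  -- the chord of `√` through `(m, √m)` and `(M, √M)` is `(√(Mm) + x) / (√M + √m)`
  have hchord : (√M + √m) * (rpowChordIntercept m M (1 / 2) + rpowChordSlope m M (1 / 2) * x)
      = √M * √m + x := by
    rw [rpowChord_eq_convex_combination hmM, ← Real.sqrt_eq_rpow, ← Real.sqrt_eq_rpow]
    field_simp
    linear_combination (M - x) * Real.sq_sqrt hm.le + (x - m) * Real.sq_sqrt hM.le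
  set w := (M * m) ^ (1 / 4 : ℝ)
  have hw0 : 0 < w := Real.rpow_pos_of_pos (mul_pos hM hm) _
  have hw : w ^ 2 = √M * √m := by
    rw [← Real.rpow_natCast, ← Real.rpow_mul (mul_pos hM hm).le, ← Real.sqrt_mul hM.le,
      Real.sqrt_eq_rpow]
    norm_num
  rw [div_mul_eq_mul_div, le_div_iff₀ (by positivity), hchord]
  nlinarith [sq_nonneg (w - √x), Real.sq_sqrt hx0]

lemma sqrt_le_mul_sqrt_rpowChord_mul (hm : 0 < m) (hmM : m < M) (hx : x ∈ Icc m M) (α : ℝ) :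
    √x ≤ (√M + √m) / (2 * (M * m) ^ (1 / 4 : ℝ))
      * √((rpowChordIntercept m M α + rpowChordSlope m M α * x)
        * (rpowChordIntercept m M (1 - α) + rpowChordSlope m M (1 - α) * x)) := by
  refine (sqrt_le_mul_rpowChord_half hm hmM hx).trans (mul_le_mul_of_nonneg_left ?_ ?_)
  · exact Real.le_sqrt_of_sq_le (sq_rpowChord_half_le_mul hm hmM hx α)
  · have := Real.rpow_pos_of_pos (mul_pos (hm.trans hmM) hm) (1 / 4)
    positivity

end Chord

section GeomMean

variable {a b g t : H →L[ℂ] H}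

lemma opRpow_eq_rpow (ha : 0 ≤ a) (r : ℝ) : opRpow a r = a ^ r :=
  (CFC.rpow_eq_cfc_real ha).symm

noncomputable def relOp (a b : H →L[ℂ] H) : H →L[ℂ] H :=
  a ^ (-(1 / 2) : ℝ) * b * a ^ (-(1 / 2) : ℝ)

lemma relOp_nonneg (hb : 0 ≤ b) : 0 ≤ relOp a b :=
  conjugate_nonneg_of_nonneg hb CFC.rpow_nonneg

lemma wgm_eq_rpow (ha : 0 ≤ a) (hb : 0 ≤ b) (μ : ℝ) :
    wgm μ a b = a ^ (1 / 2 : ℝ) * relOp a b ^ μ * a ^ (1 / 2 : ℝ) := by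
  rw [wgm, opRpow_eq_rpow ha, opRpow_eq_rpow ha, ← relOp, opRpow_eq_rpow (relOp_nonneg hb)]

lemma geomMean_eq_rpow (ha : 0 ≤ a) (hb : 0 ≤ b) :
    geomMean a b = a ^ (1 / 2 : ℝ) * relOp a b ^ (1 / 2 : ℝ) * a ^ (1 / 2 : ℝ) :=
  wgm_eq_rpow ha hb _

lemma rpow_neg_half_mul_rpow_neg_half (ha : IsStrictlyPositive a) :
    a ^ (-(1 / 2) : ℝ) * a ^ (-(1 / 2) : ℝ) = Ring.inverse a := by
  rw [← CFC.rpow_add ha.isUnit, CFC.inverse_eq_rpow_neg_one ha]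
  norm_num

lemma rpow_half_mul_relOp_mul_rpow_half (ha : IsStrictlyPositive a) (b : H →L[ℂ] H) :
    a ^ (1 / 2 : ℝ) * relOp a b * a ^ (1 / 2 : ℝ) = b := by
  rw [relOp]
  calc _ = (a ^ (1 / 2 : ℝ) * a ^ (-(1 / 2) : ℝ)) * b
        * (a ^ (-(1 / 2) : ℝ) * a ^ (1 / 2 : ℝ)) := by noncomm_ring
    _ = b := by rw [CFC.rpow_mul_rpow_neg _ ha, CFC.rpow_neg_mul_rpow _ ha, one_mul, mul_one]

lemma relOp_self (ha : IsStrictlyPositive a) : relOp a a = 1 := by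
  nth_rewrite 2 [← CFC.rpow_one a ha.nonneg]
  rw [relOp, ← CFC.rpow_add ha.isUnit, ← CFC.rpow_add ha.isUnit]
  norm_num
  exact CFC.rpow_zero a ha.nonneg

lemma geomMean_nonneg (ha : 0 ≤ a) (hb : 0 ≤ b) : 0 ≤ geomMean a b := by
  rw [geomMean_eq_rpow ha hb]
  exact conjugate_nonneg_of_nonneg CFC.rpow_nonneg CFC.rpow_nonneg

lemma IsStrictlyPositive.geomMean (ha : IsStrictlyPositive a) (hb : IsStrictlyPositive b) :
    IsStrictlyPositive (geomMean a b) := by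
  rw [geomMean_eq_rpow ha.nonneg hb.nonneg, relOp]
  have hs := IsStrictlyPositive.rpow a (-(1 / 2)) ha
  have hr : IsStrictlyPositive (a ^ (-(1 / 2) : ℝ) * b * a ^ (-(1 / 2) : ℝ)) :=
    IsStrictlyPositive.conjugate_of_isUnit_of_isSelfAdjoint _ _ hs.isUnit hs.isSelfAdjoint hb
  have ht := IsStrictlyPositive.rpow a (1 / 2) ha
  exact IsStrictlyPositive.conjugate_of_isUnit_of_isSelfAdjoint _ _ ht.isUnit ht.isSelfAdjoint
    (IsStrictlyPositive.rpow _ _ hr)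

lemma geomMean_mul_inverse_mul (ha : IsStrictlyPositive a) (hb : 0 ≤ b) :
    geomMean a b * Ring.inverse a * geomMean a b = b := by
  have hss : relOp a b ^ (1 / 2 : ℝ) * relOp a b ^ (1 / 2 : ℝ) = relOp a b := by
    rw [← CFC.sqrt_eq_rpow, CFC.sqrt_mul_sqrt_self _ (relOp_nonneg hb)]
  set s := relOp a b ^ (1 / 2 : ℝ)
  rw [geomMean_eq_rpow ha.nonneg hb, ← rpow_neg_half_mul_rpow_neg_half ha]
  calc _ = a ^ (1 / 2 : ℝ) * s * (a ^ (1 / 2 : ℝ) * a ^ (-(1 / 2) : ℝ))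
        * (a ^ (-(1 / 2) : ℝ) * a ^ (1 / 2 : ℝ)) * s * a ^ (1 / 2 : ℝ) := by noncomm_ring
    _ = a ^ (1 / 2 : ℝ) * (s * s) * a ^ (1 / 2 : ℝ) := by
        rw [CFC.rpow_mul_rpow_neg _ ha, CFC.rpow_neg_mul_rpow _ ha]; noncomm_ring
    _ = b := by rw [hss, rpow_half_mul_relOp_mul_rpow_half ha]

lemma geomMean_eq_of_mul_inverse_mul_eq (ha : IsStrictlyPositive a) (hg : 0 ≤ g)
    (h : g * Ring.inverse a * g = b) : geomMean a b = g := by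
  set s := a ^ (-(1 / 2) : ℝ)
  have hb : 0 ≤ b := h ▸ conjugate_nonneg_of_nonneg (ha.ringInverse.nonneg) hg
  have hsq : relOp a b = (s * g * s) * (s * g * s) := by
    rw [relOp, ← h, ← rpow_neg_half_mul_rpow_neg_half ha]; noncomm_ring
  have hroot : relOp a b ^ (1 / 2 : ℝ) = s * g * s := by
    rw [← CFC.sqrt_eq_rpow, hsq,
      CFC.sqrt_mul_self _ (conjugate_nonneg_of_nonneg hg CFC.rpow_nonneg)]
  rw [geomMean_eq_rpow ha.nonneg hb, hroot]
  calc _ = (a ^ (1 / 2 : ℝ) * s) * g * (s * a ^ (1 / 2 : ℝ)) := by noncomm_ring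
    _ = g := by rw [CFC.rpow_mul_rpow_neg _ ha, CFC.rpow_neg_mul_rpow _ ha, one_mul, mul_one]

lemma geomMean_comm (ha : IsStrictlyPositive a) (hb : IsStrictlyPositive b) :
    geomMean a b = geomMean b a := by
  have hg := ha.geomMean hb
  have hab := geomMean_mul_inverse_mul ha hb.nonneg
  refine (geomMean_eq_of_mul_inverse_mul_eq hb hg.nonneg ?_).symm
  set g := geomMean a b
  obtain ⟨G, hG⟩ := hg.isUnit
  obtain ⟨A, hA⟩ := ha.isUnit
  rw [← hab, ← hG, ← hA, Ring.inverse_unit, ← Units.val_mul, ← Units.val_mul, Ring.inverse_unit,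
    ← Units.val_mul, ← Units.val_mul]
  congr 1
  group

lemma geomMean_star_conj (ha : IsStrictlyPositive a) (hb : 0 ≤ b) (ht : IsUnit t) :
    geomMean (star t * a * t) (star t * b * t) = star t * geomMean a b * t := by
  refine geomMean_eq_of_mul_inverse_mul_eq
    (ht.isStrictlyPositive_star_left_conjugate_iff.mpr ha)
    (star_left_conjugate_nonneg (geomMean_nonneg ha.nonneg hb) t) ?_
  have h := geomMean_mul_inverse_mul ha hb
  conv_rhs => rw [← h]
  obtain ⟨T, rfl⟩ := ht
  obtain ⟨A, rfl⟩ := ha.isUnit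
  rw [← Units.coe_star, ← Units.val_mul, ← Units.val_mul, Ring.inverse_unit, Ring.inverse_unit]
  simp only [Units.val_mul, mul_inv_rev, mul_assoc, Units.mul_inv_cancel_left,
    Units.inv_mul_cancel_left]

lemma geomMean_cfc {c : H →L[ℂ] H} {f k : ℝ → ℝ} (hc : IsSelfAdjoint c)
    (hf : ContinuousOn f (spectrum ℝ c)) (hk : ContinuousOn k (spectrum ℝ c))
    (hf0 : ∀ x ∈ spectrum ℝ c, 0 < f x) (hk0 : ∀ x ∈ spectrum ℝ c, 0 ≤ k x) :
    geomMean (cfc f c) (cfc k c) = cfc (fun x => √(f x * k x)) c := by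
  have hfc : IsStrictlyPositive (cfc f c) := (cfc_isStrictlyPositive_iff f c hf hc).mpr hf0
  refine geomMean_eq_of_mul_inverse_mul_eq hfc (cfc_nonneg fun x _ => Real.sqrt_nonneg _) ?_
  have hroot : ContinuousOn (fun x => √(f x * k x)) (spectrum ℝ c) :=
    Real.continuous_sqrt.comp_continuousOn (hf.mul hk)
  have hinv : ContinuousOn (fun x => (f x)⁻¹) (spectrum ℝ c) :=
    hf.inv₀ fun x hx => (hf0 x hx).ne'
  rw [← cfc_inv f c (fun x hx => (hf0 x hx).ne') hf hc,
    ← cfc_mul (fun x => √(f x * k x)) (fun x => (f x)⁻¹) c hroot hinv,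
    ← cfc_mul (fun x => √(f x * k x) * (f x)⁻¹) (fun x => √(f x * k x)) c (hroot.mul hinv)
      hroot]
  refine cfc_congr fun x hx => ?_
  have hfx := hf0 x hx
  rw [mul_right_comm, Real.mul_self_sqrt (mul_nonneg hfx.le (hk0 x hx))]
  field_simp

end GeomMean

section GeomMeanOrder

variable {a a' b b' : H →L[ℂ] H}

lemma geomMean_mono_right (ha : 0 ≤ a) (hb : 0 ≤ b) (hbb' : b ≤ b') :
    geomMean a b ≤ geomMean a b' := by
  have hb' : 0 ≤ b' := hb.trans hbb'
  rw [geomMean_eq_rpow ha hb, geomMean_eq_rpow ha hb']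
  refine conjugate_le_conjugate_of_nonneg (CFC.rpow_le_rpow ⟨by norm_num, by norm_num⟩ ?_)
    CFC.rpow_nonneg
  exact conjugate_le_conjugate_of_nonneg hbb' CFC.rpow_nonneg

lemma geomMean_mono (ha : IsStrictlyPositive a) (hb : IsStrictlyPositive b) (haa' : a ≤ a')
    (hbb' : b ≤ b') : geomMean a b ≤ geomMean a' b' := by
  have ha' := ha.of_le haa'
  have hb' := hb.of_le hbb'
  calc geomMean a b ≤ geomMean a b' := geomMean_mono_right ha.nonneg hb.nonneg hbb'
    _ = geomMean b' a := geomMean_comm ha hb'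
    _ ≤ geomMean b' a' := geomMean_mono_right hb'.nonneg ha.nonneg haa'
    _ = geomMean a' b' := geomMean_comm hb' ha'

end GeomMeanOrder

section Affine

variable {a b : H →L[ℂ] H} {m M p q : ℝ}

lemma rpow_half_mul_cfc_affine_mul_rpow_half (ha : IsStrictlyPositive a) (hb : 0 ≤ b)
    (p q : ℝ) :
    a ^ (1 / 2 : ℝ) * cfc (fun x : ℝ => p + q * x) (relOp a b) * a ^ (1 / 2 : ℝ)
      = p • a + q • b := by
  have hsa := (relOp_nonneg (a := a) hb).isSelfAdjoint
  have hsq : a ^ (1 / 2 : ℝ) * a ^ (1 / 2 : ℝ) = a := by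
    rw [← CFC.sqrt_eq_rpow, CFC.sqrt_mul_sqrt_self a ha.nonneg]
  rw [cfc_const_add p (fun x => q * x) (relOp a b) (by fun_prop) hsa, cfc_const_mul_id q _ hsa,
    Algebra.algebraMap_eq_smul_one, mul_add, add_mul, mul_smul_comm, smul_mul_assoc, mul_one, hsq,
    mul_smul_comm, smul_mul_assoc, rpow_half_mul_relOp_mul_rpow_half ha]

lemma spectrum_relOp_subset (ha : IsStrictlyPositive a) (hb : 0 ≤ b) (h1 : m • a ≤ b)
    (h2 : b ≤ M • a) : spectrum ℝ (relOp a b) ⊆ Icc m M := by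
  have hrel : ∀ r : ℝ, relOp a (r • a) = algebraMap ℝ _ r := fun r => by
    rw [relOp, mul_smul_comm, smul_mul_assoc, ← relOp, relOp_self ha,
      Algebra.algebraMap_eq_smul_one]
  have hsa := (relOp_nonneg (a := a) hb).isSelfAdjoint
  have hs := (CFC.rpow_nonneg (a := a) (y := -(1 / 2))).isSelfAdjoint
  intro x hx
  exact ⟨(algebraMap_le_iff_le_spectrum hsa).mp (hrel m ▸ hs.conjugate_le_conjugate h1) x hx,
    (le_algebraMap_iff_spectrum_le hsa).mp (hrel M ▸ hs.conjugate_le_conjugate h2) x hx⟩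

lemma IsStrictlyPositive.smul_add_smul (ha : IsStrictlyPositive a) (hb : 0 ≤ b) (h1 : m • a ≤ b)
    (h2 : b ≤ M • a) (hpq : ∀ x ∈ Icc m M, 0 < p + q * x) :
    IsStrictlyPositive (p • a + q • b) := by
  have hspec := spectrum_relOp_subset ha hb h1 h2
  have ht := IsStrictlyPositive.rpow a (1 / 2) ha
  rw [← rpow_half_mul_cfc_affine_mul_rpow_half ha hb]
  exact IsStrictlyPositive.conjugate_of_isUnit_of_isSelfAdjoint _ _ ht.isUnit ht.isSelfAdjoint
    ((cfc_isStrictlyPositive_iff _ _ (by fun_prop) (relOp_nonneg hb).isSelfAdjoint).mpr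
      fun x hx => hpq x (hspec hx))

lemma smul_add_smul_le_wgm {μ : ℝ} (hμ : 0 ≤ μ) (ha : IsStrictlyPositive a) (hb : 0 ≤ b)
    (h1 : m • a ≤ b) (h2 : b ≤ M • a) (hpq : ∀ x ∈ Icc m M, p + q * x ≤ x ^ μ) :
    p • a + q • b ≤ wgm μ a b := by
  have hspec := spectrum_relOp_subset ha hb h1 h2
  rw [← rpow_half_mul_cfc_affine_mul_rpow_half ha hb, wgm_eq_rpow ha.nonneg hb,
    CFC.rpow_eq_cfc_real (relOp_nonneg hb)]
  refine conjugate_le_conjugate_of_nonneg (cfc_mono (fun x hx => hpq x (hspec hx))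
    (by fun_prop) (Real.continuous_rpow_const hμ).continuousOn) CFC.rpow_nonneg

lemma geomMean_le_smul_geomMean_affine {p' q' κ : ℝ} (ha : IsStrictlyPositive a)
    (hb : 0 ≤ b) (h1 : m • a ≤ b) (h2 : b ≤ M • a) (hpq : ∀ x ∈ Icc m M, 0 < p + q * x)
    (hpq' : ∀ x ∈ Icc m M, 0 ≤ p' + q' * x)
    (hκ : ∀ x ∈ Icc m M, √x ≤ κ * √((p + q * x) * (p' + q' * x))) :
    geomMean a b ≤ κ • geomMean (p • a + q • b) (p' • a + q' • b) := by
  have hspec := spectrum_relOp_subset ha hb h1 h2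
  have hc := relOp_nonneg (a := a) hb
  have ht := IsStrictlyPositive.rpow a (1 / 2) ha
  have hroot : relOp a b ^ (1 / 2 : ℝ)
      ≤ κ • cfc (fun x => √((p + q * x) * (p' + q' * x))) (relOp a b) := by
    rw [← cfc_const_mul κ _ _ (by fun_prop), CFC.rpow_eq_cfc_real hc]
    refine cfc_mono (fun x hx => ?_) (Real.continuous_rpow_const (by norm_num)).continuousOn
      (by fun_prop)
    rw [← Real.sqrt_eq_rpow]
    exact hκ x (hspec hx)
  calc geomMean a b = a ^ (1 / 2 : ℝ) * relOp a b ^ (1 / 2 : ℝ) * a ^ (1 / 2 : ℝ) :=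
        geomMean_eq_rpow ha.nonneg hb
    _ ≤ a ^ (1 / 2 : ℝ) * (κ • cfc (fun x => √((p + q * x) * (p' + q' * x))) (relOp a b))
          * a ^ (1 / 2 : ℝ) := conjugate_le_conjugate_of_nonneg hroot ht.nonneg
    _ = κ • geomMean
          (star (a ^ (1 / 2 : ℝ)) * cfc (fun x => p + q * x) (relOp a b) * a ^ (1 / 2 : ℝ))
          (star (a ^ (1 / 2 : ℝ)) * cfc (fun x => p' + q' * x) (relOp a b) * a ^ (1 / 2 : ℝ)) := by
      rw [geomMean_star_conj ((cfc_isStrictlyPositive_iff _ _ (by fun_prop) hc.isSelfAdjoint).mpr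
          fun x hx => hpq x (hspec hx)) (cfc_nonneg fun x hx => hpq' x (hspec hx)) ht.isUnit,
        geomMean_cfc hc.isSelfAdjoint (by fun_prop) (by fun_prop) (fun x hx => hpq x (hspec hx))
          (fun x hx => hpq' x (hspec hx)), ht.isSelfAdjoint.star_eq, mul_smul_comm, smul_mul_assoc]
    _ = κ • geomMean (p • a + q • b) (p' • a + q' • b) := by
      rw [ht.isSelfAdjoint.star_eq, rpow_half_mul_cfc_affine_mul_rpow_half ha hb,
        rpow_half_mul_cfc_affine_mul_rpow_half ha hb]

end Affine

theorem reverse_callebaut_right_general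
    (m M : ℝ) (hm : 0 < m) (hmM : m < M)
    (α : ℝ) (hα : α ∈ Set.Icc (0 : ℝ) 1)
    (n : ℕ) (A B : Fin n → (H →L[ℂ] H))
    (hA : ∀ j, 0 ≤ A j) (hAu : ∀ j, IsUnit (A j))
    (hB : ∀ j, 0 ≤ B j)
    (h1 : ∀ j, m • A j ≤ B j) (h2 : ∀ j, B j ≤ M • A j) :
    geomMean (∑ j, A j) (∑ j, B j) ≤
      ((Real.sqrt M + Real.sqrt m) / (2 * (M * m) ^ ((1 : ℝ)/4))) •
        geomMean (∑ j, wgm α (A j) (B j)) (∑ j, wgm (1 - α) (A j) (B j)) := by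
  rcases n.eq_zero_or_pos with rfl | hn
  · simp [geomMean, wgm, opRpow]
  have hSA : IsStrictlyPositive (∑ j, A j) := ((hAu ⟨0, hn⟩).isStrictlyPositive (hA _)).of_le
    (Finset.single_le_sum (fun j _ => hA j) (Finset.mem_univ _))
  have hSB : 0 ≤ ∑ j, B j := Finset.sum_nonneg fun j _ => hB j
  have h1' : m • ∑ j, A j ≤ ∑ j, B j := by
    simpa only [Finset.smul_sum] using Finset.sum_le_sum fun j _ => h1 j
  have h2' : ∑ j, B j ≤ M • ∑ j, A j := by
    simpa only [Finset.smul_sum] using Finset.sum_le_sum fun j _ => h2 j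
  have hchord : ∀ β ∈ Set.Icc (0 : ℝ) 1, rpowChordIntercept m M β • ∑ j, A j
      + rpowChordSlope m M β • ∑ j, B j ≤ ∑ j, wgm β (A j) (B j) := fun β hβ => by
    simpa only [Finset.smul_sum, ← Finset.sum_add_distrib] using Finset.sum_le_sum fun j _ =>
      smul_add_smul_le_wgm hβ.1 ((hAu j).isStrictlyPositive (hA j)) (hB j) (h1 j) (h2 j)
        fun x hx => rpowChord_le_rpow hm.le hmM hβ hx
  have hpos : ∀ β, IsStrictlyPositive (rpowChordIntercept m M β • ∑ j, A j
      + rpowChordSlope m M β • ∑ j, B j) := fun β =>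
    hSA.smul_add_smul hSB h1' h2' fun x hx => rpowChord_pos hm hmM hx
  have hκ : 0 ≤ (√M + √m) / (2 * (M * m) ^ (1 / 4 : ℝ)) := by
    have := Real.rpow_pos_of_pos (mul_pos (hm.trans hmM) hm) (1 / 4)
    positivity
  calc _ ≤ _ := geomMean_le_smul_geomMean_affine hSA hSB h1' h2'
        (fun x hx => rpowChord_pos hm hmM hx) (fun x hx => (rpowChord_pos hm hmM hx).le)
        (fun x hx => sqrt_le_mul_sqrt_rpowChord_mul hm hmM hx α)
    _ ≤ _ := smul_le_smul_of_nonneg_left (geomMean_mono (hpos α) (hpos (1 - α)) (hchord α hα)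
        (hchord (1 - α) ⟨sub_nonneg.mpr hα.2, sub_le_self 1 hα.1⟩)) hκ

/-- `((√M + √m)/(2(Mm)^{1/4})) · [(Σ A_j ♯_α B_j) ♯ (Σ A_j ♯_{1−α} B_j)] ≥ (Σ A_j) ♯ (Σ B_j)`
whenever `0 < mA_j ≤ B_j ≤ MA_j` and `α ∈ [0,1]`. -/
theorem reverse_callebaut_right
    (m M : ℝ) (hm : 0 < m) (hmM : m < M)
    (α : ℝ) (hα : α ∈ Set.Icc (0 : ℝ) 1)
    (n : ℕ) (A B : Fin n → (H →L[ℂ] H))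
    (hA : ∀ j, 0 ≤ A j) (hAu : ∀ j, IsUnit (A j))
    (hB : ∀ j, 0 ≤ B j) (hBu : ∀ j, IsUnit (B j))
    (h1 : ∀ j, m • A j ≤ B j) (h2 : ∀ j, B j ≤ M • A j) :
    geomMean (∑ j, A j) (∑ j, B j) ≤
      ((Real.sqrt M + Real.sqrt m) / (2 * (M * m) ^ ((1 : ℝ)/4))) •
        geomMean (∑ j, wgm α (A j) (B j)) (∑ j, wgm (1 - α) (A j) (B j)) :=
  reverse_callebaut_right_general m M hm hmM α hα n A B hA hAu hB h1 h2
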